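/- arXiv:1906.10619 — 6 statements merged into one kernel-verified Lean document; each statement's English description precedes it below -/
import Mathlib

section
/- Let C be a category and X : Δᵒᵖ ⥤ C a simplicial object. Let A_{≥1} denote the category whose objects are the objects [m] of Δ with m ≥ 1 and whose morphisms are the active morphisms of Δ, and consider the functor (A_{≥1})ᵒᵖ → C obtained by restricting X. Then the cone with apex X([0]) whose leg at [m] is X(t_m) : X([0]) → X([m]) — where t_m : [m] ⟶ [0] is the unique morphism of Δ (which is active) — is a limit cone over this functor. -/
/-!
Formalization of statements from "Higher Segal spaces via higher excision" (T. Walde).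
-/

open CategoryTheory CategoryTheory.Limits SimplexCategory

universe v u

namespace HigherSegal

set_option linter.unusedVariables false
set_option linter.unusedSectionVars false

/-- A morphism of `Δ` is left active if it preserves the minimal element. -/
def IsLeftActive {x y : SimplexCategory} (f : x ⟶ y) : Prop :=
  f.toOrderHom 0 = 0

/-- A morphism of `Δ` is right active if it preserves the maximal element. -/
def IsRightActive {x y : SimplexCategory} (f : x ⟶ y) : Prop :=
  f.toOrderHom (Fin.last x.len) = Fin.last y.len

/-- A morphism of `Δ` is active if it is both left active and right active. -/
def IsActive {x y : SimplexCategory} (f : x ⟶ y) : Prop :=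
  IsLeftActive f ∧ IsRightActive f

lemma isActive_id (x : SimplexCategory) : IsActive (𝟙 x) := ⟨rfl, rfl⟩

lemma isActive_comp {x y z : SimplexCategory} {f : x ⟶ y} {g : y ⟶ z}
    (hf : IsActive f) (hg : IsActive g) : IsActive (f ≫ g) := by
  constructor
  · show (f ≫ g).toOrderHom 0 = 0
    have : (f ≫ g).toOrderHom 0 = g.toOrderHom (f.toOrderHom 0) := rfl
    rw [this, hf.1, hg.1]
  · show (f ≫ g).toOrderHom (Fin.last x.len) = Fin.last z.len
    have : (f ≫ g).toOrderHom (Fin.last x.len) =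
        g.toOrderHom (f.toOrderHom (Fin.last x.len)) := rfl
    rw [this, hf.2, hg.2]

/-- The category whose objects are the `[m]` with `m ≥ 1` and whose morphisms are the
active morphisms of `Δ`. -/
def ActiveGe1 : Type := { x : SimplexCategory // 1 ≤ x.len }

instance : Category ActiveGe1 where
  Hom x y := { f : x.1 ⟶ y.1 // IsActive f }
  id x := ⟨𝟙 x.1, isActive_id x.1⟩
  comp f g := ⟨f.1 ≫ g.1, isActive_comp f.2 g.2⟩
  id_comp f := Subtype.ext (Category.id_comp f.1)
  comp_id f := Subtype.ext (Category.comp_id f.1)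
  assoc f g h := Subtype.ext (Category.assoc f.1 g.1 h.1)

/-- The restriction of a simplicial object `X` to the opposite of the category of active
morphisms between the `[m]` with `m ≥ 1`. -/
def activeRestriction {C : Type u} [Category.{v} C] (X : SimplexCategoryᵒᵖ ⥤ C) :
    ActiveGe1ᵒᵖ ⥤ C where
  obj x := X.obj (Opposite.op x.unop.1)
  map {x y} f := X.map (f.unop.1).op
  map_id x := X.map_id _
  map_comp {x y z} f g := X.map_comp (f.unop.1).op (g.unop.1).op

/-- The unique morphism `t : x ⟶ [0]` in `Δ`. -/
def toZero (x : SimplexCategory) : x ⟶ SimplexCategory.mk 0 :=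
  SimplexCategory.Hom.mk ⟨fun _ => (0 : Fin ((SimplexCategory.mk 0).len + 1)), monotone_const⟩

instance : Subsingleton (Fin ((SimplexCategory.mk 0).len + 1)) :=
  (inferInstance : Subsingleton (Fin 1))

lemma toZero_unique {x : SimplexCategory} (f g : x ⟶ SimplexCategory.mk 0) : f = g := by
  apply SimplexCategory.Hom.ext
  apply OrderHom.ext
  funext i
  exact Subsingleton.elim _ _

lemma toZero_active (x : SimplexCategory) : IsActive (toZero x) :=
  ⟨rfl, Subsingleton.elim _ _⟩

/-- The cone with apex `X([0])` over the restriction of `X` to active morphisms between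
objects `[m]` with `m ≥ 1`; the leg at `[m]` is `X(t_m) : X([0]) ⟶ X([m])`. -/
def activeCone {C : Type u} [Category.{v} C] (X : SimplexCategoryᵒᵖ ⥤ C) :
    Cone (activeRestriction X) where
  pt := X.obj (Opposite.op (SimplexCategory.mk 0))
  π :=
    { app := fun x => X.map (toZero x.unop.1).op
      naturality := fun x y g => by
        dsimp [activeRestriction]
        rw [Category.id_comp, ← X.map_comp, ← op_comp]
        congr 1 }


section Aux

open Opposite

/-- The object `[1]` of `ActiveGe1`. -/
def oneObj : ActiveGe1 := ⟨SimplexCategory.mk 1, le_refl 1⟩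

/-- The unique morphism `[0] ⟶ [1]` hitting `0`. -/
def zeroToOne : SimplexCategory.mk 0 ⟶ SimplexCategory.mk 1 :=
  SimplexCategory.Hom.mk ⟨fun _ => 0, monotone_const⟩

/-- The inclusion `[n] ⟶ [n+1]` as initial segment. -/
def inclMap (n : ℕ) : SimplexCategory.mk n ⟶ SimplexCategory.mk (n + 1) :=
  SimplexCategory.Hom.mk ⟨fun i => ⟨i.1, by
    have := i.2
    simp only [SimplexCategory.len_mk] at this ⊢
    omega⟩, fun a b h => h⟩

/-- The retraction `[n+1] ⟶ [n]` collapsing the last two elements. -/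
def projMap (n : ℕ) : SimplexCategory.mk (n + 1) ⟶ SimplexCategory.mk n :=
  SimplexCategory.Hom.mk ⟨fun i => ⟨min i.1 n, by
    simp only [SimplexCategory.len_mk]
    omega⟩,
    fun a b h => by simpa using min_le_min_right n (α := ℕ) h⟩

/-- The active map `[n+1] ⟶ [1]` sending everything except the last element to `0`. -/
def collapseMap (n : ℕ) : SimplexCategory.mk (n + 1) ⟶ SimplexCategory.mk 1 :=
  SimplexCategory.Hom.mk ⟨fun i => if i.1 ≤ n then 0 else 1, by
    intro a b h
    dsimp only
    split_ifs with ha hb hb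
    · exact le_refl _
    · exact Fin.zero_le _
    · exact absurd (le_trans (show a.1 ≤ b.1 from h) hb) ha
    · exact le_refl _⟩

lemma projMap_active (n : ℕ) : IsActive (projMap n) := by
  constructor
  · exact Fin.ext (by show min 0 n = 0; simp)
  · exact Fin.ext (by show min (n + 1) n = n; omega)

lemma collapseMap_active (n : ℕ) : IsActive (collapseMap n) := by
  constructor
  · show (if (0 : Fin (n + 2)).1 ≤ n then (0 : Fin 2) else 1) = 0
    simp
  · show (if (Fin.last (n + 1)).1 ≤ n then (0 : Fin 2) else 1) = Fin.last 1
    simp [Fin.last]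

lemma incl_comp_proj (n : ℕ) : inclMap n ≫ projMap n = 𝟙 _ := by
  apply SimplexCategory.Hom.ext
  apply OrderHom.ext
  funext i
  have h2 : i.1 ≤ n := by
    have := i.2
    simp only [SimplexCategory.len_mk] at this
    omega
  exact Fin.ext (by show min i.1 n = i.1; omega)

lemma toZero_comp_zeroToOne (n : ℕ) :
    toZero (SimplexCategory.mk n) ≫ zeroToOne = inclMap n ≫ collapseMap n := by
  apply SimplexCategory.Hom.ext
  apply OrderHom.ext
  funext i
  show (0 : Fin 2) = if ((inclMap n).toOrderHom i).1 ≤ n then 0 else 1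
  have h1 : ((inclMap n).toOrderHom i).1 = i.1 := rfl
  have h2 : i.1 ≤ n := by
    have := i.2
    simp only [SimplexCategory.len_mk] at this
    omega
  rw [h1, if_pos h2]

lemma delta_comp_toZero :
    zeroToOne ≫ toZero (SimplexCategory.mk 1) = 𝟙 (SimplexCategory.mk 0) :=
  toZero_unique _ _

end Aux

/-- For any simplicial object `X`, the cone with apex `X([0])` and legs
`X(t_m)` over the restriction of `X` to the opposite of the category of active morphisms
between the `[m]` with `m ≥ 1` is a limit cone. -/
theorem activeCone_isLimit {C : Type u} [Category.{v} C] (X : SimplexCategoryᵒᵖ ⥤ C) :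
    Nonempty (IsLimit (activeCone X)) := by
  constructor
  refine
    { lift := fun s => s.π.app (Opposite.op oneObj) ≫ X.map zeroToOne.op
      fac := fun s j => ?_
      uniq := fun s u hu => ?_ }
  · obtain ⟨j⟩ := j
    obtain ⟨x, hx⟩ := j
    induction x using SimplexCategory.rec with
    | _ n =>
      let xObj : ActiveGe1 := ⟨SimplexCategory.mk n, hx⟩
      let yObj : ActiveGe1 := ⟨SimplexCategory.mk (n + 1), by simp⟩
      let g1 : yObj ⟶ xObj := ⟨projMap n, projMap_active n⟩
      let g2 : yObj ⟶ oneObj := ⟨collapseMap n, collapseMap_active n⟩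
      have w1 := s.w (g1.op : Opposite.op xObj ⟶ Opposite.op yObj)
      have w2 := s.w (g2.op : Opposite.op oneObj ⟶ Opposite.op yObj)
      dsimp [activeRestriction] at w1 w2
      show (s.π.app (Opposite.op oneObj) ≫ X.map zeroToOne.op) ≫
          X.map (toZero (SimplexCategory.mk n)).op = s.π.app (Opposite.op xObj)
      erw [Category.assoc, ← X.map_comp, ← op_comp, toZero_comp_zeroToOne n, op_comp,
        X.map_comp, ← Category.assoc, w2, ← w1, Category.assoc, ← X.map_comp, ← op_comp,
        incl_comp_proj n, op_id, X.map_id, Category.comp_id]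
  · have h1 := hu (Opposite.op oneObj)
    dsimp [activeCone] at h1
    show u = s.π.app (Opposite.op oneObj) ≫ X.map zeroToOne.op
    have h2 : zeroToOne ≫ toZero oneObj.1 = 𝟙 (SimplexCategory.mk 0) := toZero_unique _ _
    erw [← h1, Category.assoc, ← X.map_comp, ← op_comp, h2, op_id,
      X.map_id, Category.comp_id]

end HigherSegal
end

section
/- (Key lemma.) Let p : C ⥤ B be a functor between categories which is a fibration (for every object y of C and every morphism g : b ⟶ p(y) of B there exists a strongly p-cartesian morphism φ : x ⟶ y with p(φ) = g), and let X : Δᵒᵖ ⥤ C be a simplicial object such that for every m ≥ 1 the morphism X(a_m) : X([m]) → X([1]) is strongly p-cartesian, where a_m : [1] ⟶ [m] is the unique active morphism (0 ↦ 0, 1 ↦ m). Then X(α) is strongly p-cartesian for every active morphism α of Δ (in particular for the active morphisms with target [0]). -/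
/-!
Formalization of statements from "Higher Segal spaces via higher excision" (T. Walde).
-/

open CategoryTheory CategoryTheory.Limits SimplexCategory

universe v u

namespace HigherSegal

set_option linter.unusedVariables false
set_option linter.unusedSectionVars false

/-- The unique active morphism `a_m : [1] ⟶ [m]` (`0 ↦ 0`, `1 ↦ m`). -/
def activeHom (m : ℕ) : SimplexCategory.mk 1 ⟶ SimplexCategory.mk m :=
  SimplexCategory.mkHom
    { toFun := fun i => if i = 0 then 0 else Fin.last m
      monotone' := by
        intro a b hab
        by_cases ha : a = 0
        · by_cases hb : b = 0 <;> simp [ha, hb, Fin.zero_le]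
        · have hb : b ≠ 0 := fun h => ha (le_antisymm (h ▸ hab) (Fin.zero_le a))
          simp [ha, hb] }

/-- A morphism `φ : x ⟶ y` is strongly `p`-cartesian if for every `ψ : z ⟶ y` and every
factorization `p(ψ) = p(φ) ∘ u` there is a unique `χ : z ⟶ x` with `p(χ) = u` and
`φ ∘ χ = ψ`. -/
def StronglyCartesianHom {C : Type u} [Category.{v} C] {B : Type*} [Category B]
    (p : C ⥤ B) {x y : C} (φ : x ⟶ y) : Prop :=
  ∀ {z : C} (ψ : z ⟶ y) (u : p.obj z ⟶ p.obj x),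
    p.map ψ = u ≫ p.map φ → ∃! χ : z ⟶ x, p.map χ = u ∧ χ ≫ φ = ψ

/-- A functor `p : C ⥤ B` is a fibration if every `g : b ⟶ p(y)` admits a strongly
`p`-cartesian lift. -/
def IsFibrationFunctor {C : Type u} [Category.{v} C] {B : Type*} [Category B]
    (p : C ⥤ B) : Prop :=
  ∀ (y : C) (b : B) (g : b ⟶ p.obj y),
    ∃ (x : C) (φ : x ⟶ y) (h : p.obj x = b),
      StronglyCartesianHom p φ ∧ p.map φ = CategoryTheory.eqToHom h ≫ g

section Lemmas

variable {C : Type u} [Category.{v} C] {B : Type*} [Category B] (p : C ⥤ B)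

/-- Identities are strongly cartesian. -/
theorem stronglyCartesian_id (x : C) : StronglyCartesianHom p (𝟙 x) := by
  intro z ψ u h
  refine ⟨ψ, ⟨by simpa using h, by simp⟩, ?_⟩
  rintro χ ⟨h1, h2⟩
  simpa using h2

/-- Left cancellation: if `φ₁ ≫ φ₂` and `φ₂` are strongly cartesian, so is `φ₁`. -/
theorem stronglyCartesian_of_comp {x y z : C} {φ₁ : x ⟶ y} {φ₂ : y ⟶ z}
    (h12 : StronglyCartesianHom p (φ₁ ≫ φ₂)) (h2 : StronglyCartesianHom p φ₂) :
    StronglyCartesianHom p φ₁ := by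
  intro w ψ u hu
  obtain ⟨χ, ⟨hχ1, hχ2⟩, hχu⟩ := h12 (ψ ≫ φ₂) u (by simp [hu])
  have key : χ ≫ φ₁ = ψ := by
    obtain ⟨τ, ⟨_, _⟩, hτu⟩ := h2 (ψ ≫ φ₂) (p.map ψ) (p.map_comp _ _)
    have e1 := hτu (χ ≫ φ₁) ⟨by simp [hχ1, hu], by simpa using hχ2⟩
    have e2 := hτu ψ ⟨rfl, rfl⟩
    rw [e1, e2]
  refine ⟨χ, ⟨hχ1, key⟩, ?_⟩
  rintro χ' ⟨h1', h2'⟩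
  exact hχu χ' ⟨h1', by simp [← h2']⟩

end Lemmas

section SimplexFacts

/-- Any two morphisms into `[0]` are equal. -/
theorem hom_to_zero_eq {a : SimplexCategory} (f g : a ⟶ SimplexCategory.mk 0) : f = g := by
  apply SimplexCategory.Hom.ext
  apply OrderHom.ext
  funext i
  exact @Subsingleton.elim (Fin 1) _ _ _

/-- The degeneracy `[2] ⟶ [1]`, `0,1 ↦ 0`, `2 ↦ 1`. -/
def s0 : SimplexCategory.mk 2 ⟶ SimplexCategory.mk 1 :=
  SimplexCategory.mkHom ⟨fun i => if i ≤ 1 then 0 else 1, by decide⟩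

/-- The degeneracy `[2] ⟶ [1]`, `0 ↦ 0`, `1,2 ↦ 1`. -/
def s1 : SimplexCategory.mk 2 ⟶ SimplexCategory.mk 1 :=
  SimplexCategory.mkHom ⟨fun i => if i = 0 then 0 else 1, by decide⟩

/-- The face `[1] ⟶ [2]`, `0 ↦ 0`, `1 ↦ 1`. -/
def d2 : SimplexCategory.mk 1 ⟶ SimplexCategory.mk 2 :=
  SimplexCategory.mkHom ⟨fun i => if i = 0 then 0 else 1, by decide⟩

/-- The face `[0] ⟶ [1]`, `0 ↦ 0`. -/
def d1 : SimplexCategory.mk 0 ⟶ SimplexCategory.mk 1 :=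
  SimplexCategory.mkHom ⟨fun _ => 0, monotone_const⟩

theorem a2_comp_s0 : activeHom 2 ≫ s0 = 𝟙 (SimplexCategory.mk 1) := by
  apply SimplexCategory.Hom.ext; apply OrderHom.ext; funext i
  simp only [activeHom, s0, SimplexCategory.mkHom, SimplexCategory.comp_toOrderHom,
    SimplexCategory.Hom.toOrderHom_mk, SimplexCategory.id_toOrderHom]
  fin_cases i <;> rfl

theorem a2_comp_s1 : activeHom 2 ≫ s1 = 𝟙 (SimplexCategory.mk 1) := by
  apply SimplexCategory.Hom.ext; apply OrderHom.ext; funext i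
  simp only [activeHom, s1, SimplexCategory.mkHom, SimplexCategory.comp_toOrderHom,
    SimplexCategory.Hom.toOrderHom_mk, SimplexCategory.id_toOrderHom]
  fin_cases i <;> rfl

theorem d2_comp_s1 : d2 ≫ s1 = 𝟙 (SimplexCategory.mk 1) := by
  apply SimplexCategory.Hom.ext; apply OrderHom.ext; funext i
  simp only [d2, s1, SimplexCategory.mkHom, SimplexCategory.comp_toOrderHom,
    SimplexCategory.Hom.toOrderHom_mk, SimplexCategory.id_toOrderHom]
  fin_cases i <;> rfl

theorem d2_comp_s0 (g : SimplexCategory.mk 1 ⟶ SimplexCategory.mk 0) :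
    d2 ≫ s0 = g ≫ d1 := by
  have hg : g = SimplexCategory.mkHom ⟨fun _ => 0, monotone_const⟩ := hom_to_zero_eq _ _
  subst hg
  apply SimplexCategory.Hom.ext; apply OrderHom.ext; funext i
  simp only [d2, s0, d1, SimplexCategory.mkHom, SimplexCategory.comp_toOrderHom,
    SimplexCategory.Hom.toOrderHom_mk]
  fin_cases i <;> rfl

theorem activeHom_apply_zero (m : ℕ) : (activeHom m).toOrderHom 0 = 0 := by
  simp [activeHom, SimplexCategory.mkHom]
  rfl

theorem activeHom_apply_one (m : ℕ) : (activeHom m).toOrderHom 1 = Fin.last m := rfl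

/-- Any active morphism `[1] ⟶ [m]` equals `activeHom m`. -/
theorem active_one_eq {m : ℕ} (f : SimplexCategory.mk 1 ⟶ SimplexCategory.mk m)
    (hf : IsActive f) : f = activeHom m := by
  apply SimplexCategory.Hom.ext; apply OrderHom.ext; funext i
  obtain ⟨iv, hiv⟩ := i
  match iv, hiv with
  | 0, h => exact hf.1.trans (activeHom_apply_zero m).symm
  | 1, h => exact hf.2.trans (activeHom_apply_one m).symm

theorem comp_active_eq {n m : ℕ} (α : SimplexCategory.mk n ⟶ SimplexCategory.mk m)
    (hα : IsActive α) : activeHom n ≫ α = activeHom m := by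
  apply active_one_eq
  constructor
  · show (activeHom n ≫ α).toOrderHom 0 = 0
    rw [SimplexCategory.comp_toOrderHom]
    simp only [OrderHom.comp_coe, Function.comp_apply]
    rw [activeHom_apply_zero]
    exact hα.1
  · show (activeHom n ≫ α).toOrderHom (Fin.last _) = Fin.last _
    rw [SimplexCategory.comp_toOrderHom]
    simp only [OrderHom.comp_coe, Function.comp_apply]
    have : (Fin.last (SimplexCategory.mk 1).len : Fin 2) = 1 := rfl
    rw [this, activeHom_apply_one]
    exact hα.2

end SimplexFacts

section Sigma

variable {C : Type u} [Category.{v} C] {B : Type*} [Category B] (p : C ⥤ B)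

/-- The key special case: `X` applied to a morphism `[1] ⟶ [0]` is strongly cartesian,
given that `X (a₂)` is strongly cartesian. -/
theorem stronglyCartesian_sigma (X : SimplexCategoryᵒᵖ ⥤ C)
    (h2 : StronglyCartesianHom p (X.map (activeHom 2).op))
    (g : SimplexCategory.mk 1 ⟶ SimplexCategory.mk 0) :
    StronglyCartesianHom p (X.map g.op) := by
  intro z ψ u hu
  -- basic identities in C
  have hdg : d1 ≫ g = 𝟙 (SimplexCategory.mk 0) := hom_to_zero_eq _ _
  have hXgd : X.map g.op ≫ X.map d1.op = 𝟙 _ := by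
    rw [← X.map_comp, ← op_comp, hdg, op_id, X.map_id]
  have hXs0a2 : X.map s0.op ≫ X.map (activeHom 2).op = 𝟙 _ := by
    rw [← X.map_comp, ← op_comp, a2_comp_s0, op_id, X.map_id]
  have hXs1a2 : X.map s1.op ≫ X.map (activeHom 2).op = 𝟙 _ := by
    rw [← X.map_comp, ← op_comp, a2_comp_s1, op_id, X.map_id]
  -- step 1 : ψ ≫ X(s0) = ψ ≫ X(s1) via cartesianness of X(a₂)
  have hpu : p.map (ψ ≫ X.map s0.op) = p.map (ψ ≫ X.map s1.op) := by
    rw [p.map_comp, p.map_comp, hu]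
    have e : X.map g.op ≫ X.map s0.op = X.map g.op ≫ X.map s1.op := by
      rw [← X.map_comp, ← X.map_comp, ← op_comp, ← op_comp,
        hom_to_zero_eq (s0 ≫ g) (s1 ≫ g)]
    simp only [Category.assoc, ← p.map_comp, e]
  have step1 : ψ ≫ X.map s0.op = ψ ≫ X.map s1.op := by
    obtain ⟨τ, _, hτu⟩ := h2 ψ (p.map (ψ ≫ X.map s1.op)) (by
      rw [← p.map_comp]
      congr 1
      rw [Category.assoc, hXs1a2, Category.comp_id])
    have e0 := hτu (ψ ≫ X.map s0.op) ⟨hpu, by rw [Category.assoc, hXs0a2, Category.comp_id]⟩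
    have e1 := hτu (ψ ≫ X.map s1.op) ⟨rfl, by rw [Category.assoc, hXs1a2, Category.comp_id]⟩
    rw [e0, e1]
  -- step 2 : ψ ≫ X(d1) ≫ X(g) = ψ
  have step2 : (ψ ≫ X.map d1.op) ≫ X.map g.op = ψ := by
    rw [Category.assoc]
    have c0 : X.map s0.op ≫ X.map d2.op = X.map d1.op ≫ X.map g.op := by
      rw [← X.map_comp, ← X.map_comp, ← op_comp, ← op_comp, d2_comp_s0 g]
    have c1 : X.map s1.op ≫ X.map d2.op = 𝟙 _ := by
      rw [← X.map_comp, ← op_comp, d2_comp_s1, op_id, X.map_id]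
    calc ψ ≫ X.map d1.op ≫ X.map g.op
        = ψ ≫ X.map s0.op ≫ X.map d2.op := by rw [c0]
      _ = ψ ≫ X.map s1.op ≫ X.map d2.op := by
          rw [← Category.assoc, ← Category.assoc, step1]
      _ = ψ := by rw [c1, Category.comp_id]
  refine ⟨ψ ≫ X.map d1.op, ⟨?_, step2⟩, ?_⟩
  · rw [p.map_comp, hu, Category.assoc, ← p.map_comp, hXgd, p.map_id, Category.comp_id]
  · rintro χ ⟨hχ1, hχ2⟩
    calc χ = χ ≫ X.map g.op ≫ X.map d1.op := by rw [hXgd, Category.comp_id]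
      _ = ψ ≫ X.map d1.op := by rw [← Category.assoc, hχ2]

end Sigma

/-- **Key lemma.** Let `p : C ⥤ B` be a fibration and `X` a simplicial
object in `C` such that `X(a_m)` is strongly `p`-cartesian for all `m ≥ 1`. Then `X(α)`
is strongly `p`-cartesian for every active morphism `α` of `Δ`. -/
theorem keyLemma {C : Type u} [Category.{v} C] {B : Type*} [Category B] (p : C ⥤ B)
    (hp : IsFibrationFunctor p) (X : SimplexCategoryᵒᵖ ⥤ C)
    (hX : ∀ m : ℕ, 1 ≤ m → StronglyCartesianHom p (X.map (activeHom m).op)) :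
    ∀ {x y : SimplexCategory} (α : x ⟶ y), IsActive α →
      StronglyCartesianHom p (X.map α.op) := by
  intro x y α hα
  obtain ⟨n, rfl⟩ : ∃ n, SimplexCategory.mk n = x := ⟨x.len, SimplexCategory.mk_len x⟩
  obtain ⟨m, rfl⟩ : ∃ m, SimplexCategory.mk m = y := ⟨y.len, SimplexCategory.mk_len y⟩
  rcases Nat.eq_zero_or_pos n with hn | hn
  · -- n = 0 forces m = 0 and α = 𝟙
    subst hn
    have hm : m = 0 := by
      have h3 : Fin.last (SimplexCategory.mk m).len
          = (0 : Fin ((SimplexCategory.mk m).len + 1)) := by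
        rw [← hα.2, ← hα.1]
        exact congrArg _ (@Subsingleton.elim (Fin 1) _ _ _)
      have h4 := congrArg Fin.val h3
      simpa using h4
    subst hm
    have : α = 𝟙 (SimplexCategory.mk 0) := hom_to_zero_eq _ _
    subst this
    rw [op_id, X.map_id]
    intro z ψ u h
    exact stronglyCartesian_id p _ ψ u h
  · rcases Nat.eq_zero_or_pos m with hm | hm
    · -- target [0] : use the sigma lemma and cancellation
      subst hm
      have hcomp : X.map α.op ≫ X.map (activeHom n).op
          = X.map (activeHom n ≫ α).op := by
        rw [op_comp, X.map_comp]
      have hσ : StronglyCartesianHom p (X.map (activeHom n ≫ α).op) :=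
        stronglyCartesian_sigma p X (hX 2 (by norm_num)) _
      rw [← hcomp] at hσ
      intro z ψ u h
      exact stronglyCartesian_of_comp p hσ (hX n hn) ψ u h
    · -- target [m], m ≥ 1 : cancellation
      have hcomp : X.map α.op ≫ X.map (activeHom n).op
          = X.map (activeHom m).op := by
        rw [← X.map_comp, ← op_comp, comp_active_eq α hα]
      have h' : StronglyCartesianHom p (X.map α.op ≫ X.map (activeHom n).op) := by
        rw [hcomp]; intro z ψ u h; exact hX m hm ψ u h
      intro z ψ u h
      exact stronglyCartesian_of_comp p h' (hX n hn) ψ u h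

end HigherSegal
end

section
/- Let C be a category with finite limits, S a finite set, s ∈ S, and set S' = S ∖ {s}. Let Q : P(S) ⥤ C be an S-cube in C and suppose that the S'-cube T ↦ Q(T ∪ {s}) (for T ⊆ S') is a limit cube. Then the canonical morphism from the limit of Q over the nonempty subsets of S to the limit of Q over the nonempty subsets of S' (induced by restricting cones along the inclusion of index posets) is an isomorphism; in particular, Q is a limit cube if and only if the restricted S'-cube T ↦ Q(T) (for T ⊆ S') is a limit cube. -/
/-!
Formalization of statements from "Higher Segal spaces via higher excision" (T. Walde).
-/

open CategoryTheory CategoryTheory.Limits SimplexCategory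

universe v u

namespace HigherSegal

set_option linter.unusedVariables false
set_option linter.unusedSectionVars false

/-- The cone over the restriction of an `S`-cube `R : Finset S ⥤ C` to the nonempty
subsets of `S`, with apex the value of the cube at `∅` and legs the images of the
inclusions `∅ ⊆ T`. -/
def cubeCone {C : Type u} [Category.{v} C] {S : Type} (R : Finset S ⥤ C) :
    Cone (ObjectProperty.ι (fun T : Finset S => T.Nonempty) ⋙ R) where
  pt := R.obj ⊥
  π :=
    { app := fun T => R.map (homOfLE bot_le)
      naturality := fun T T' g => by
        dsimp
        rw [Category.id_comp, ← R.map_comp]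
        rfl }

/-- An `S`-cube in `C` is a limit cube if the cone with apex its value at `∅` exhibits it
as the limit of the restriction of the cube to nonempty subsets of `S`. -/
def IsLimitCube {C : Type u} [Category.{v} C] {S : Type} (R : Finset S ⥤ C) : Prop :=
  Nonempty (IsLimit (cubeCone R))

section Restriction

variable {C : Type u} [Category.{v} C] {S : Type} [DecidableEq S] (s : S)

/-- The embedding of subsets of `S' = S ∖ {s}` into subsets of `S`. -/
def embSub (T : Finset {t : S // t ≠ s}) : Finset S :=
  T.map (Function.Embedding.subtype _)

lemma embSub_mono : Monotone (embSub s) := fun _ _ h =>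
  Finset.map_subset_map.mpr h

/-- The restricted `S'`-cube `T ↦ Q(T)` of an `S`-cube `Q`. -/
def restrictedCube (Q : Finset S ⥤ C) : Finset {t : S // t ≠ s} ⥤ C :=
  (embSub_mono s).functor ⋙ Q

lemma insert_mono : Monotone (fun T : Finset {t : S // t ≠ s} => insert s (embSub s T)) :=
  fun _ _ h => Finset.insert_subset_insert s (Finset.map_subset_map.mpr h)

/-- The `S'`-cube `T ↦ Q(T ∪ {s})` of an `S`-cube `Q`. -/
def insertCube (Q : Finset S ⥤ C) : Finset {t : S // t ≠ s} ⥤ C :=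
  (insert_mono s).functor ⋙ Q

lemma embSub_nonempty {T : Finset {t : S // t ≠ s}} (h : T.Nonempty) :
    (embSub s T).Nonempty :=
  Finset.map_nonempty.mpr h

/-- Restriction of a cone over the nonempty subsets of `S` to a cone over the nonempty
subsets of `S' = S ∖ {s}`. -/
def restrictCone (Q : Finset S ⥤ C)
    (c : Cone (ObjectProperty.ι (fun T : Finset S => T.Nonempty) ⋙ Q)) :
    Cone (ObjectProperty.ι (fun T : Finset {t : S // t ≠ s} => T.Nonempty) ⋙
      restrictedCube s Q) where
  pt := c.pt
  π :=
    { app := fun T => c.π.app ⟨embSub s T.obj, embSub_nonempty s T.property⟩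
      naturality := fun T T' g => by
        dsimp
        have m : (⟨embSub s T.obj, embSub_nonempty s T.property⟩ :
            ObjectProperty.FullSubcategory fun T : Finset S => T.Nonempty) ⟶
            ⟨embSub s T'.obj, embSub_nonempty s T'.property⟩ :=
          ⟨homOfLE (embSub_mono s (leOfHom g.hom))⟩
        exact (Category.id_comp _).trans (c.w m).symm }

end Restriction



section Proof

variable {C : Type u} [Category.{v} C] {S : Type} [DecidableEq S] (s : S) (Q : Finset S ⥤ C)

lemma Qmap_comp {X Y Z : Finset S} (h1 : X ≤ Y) (h2 : Y ≤ Z) :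
    Q.map (homOfLE h1) ≫ Q.map (homOfLE h2) = Q.map (homOfLE (h1.trans h2)) := by
  rw [← Q.map_comp]; rfl

/-- The projection of a subset of `S` to a subset of `S' = S ∖ {s}`. -/
def unSub (U : Finset S) : Finset {t : S // t ≠ s} := U.subtype _

lemma embSub_unSub_subset (U : Finset S) : embSub s (unSub s U) ⊆ U := by
  rw [embSub, unSub, Finset.subtype_map]
  exact Finset.filter_subset _ _

lemma unSub_mono {U V : Finset S} (h : U ⊆ V) : unSub s U ⊆ unSub s V := by
  intro x hx
  rw [unSub, Finset.mem_subtype] at hx ⊢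
  exact h hx

lemma unSub_embSub_obj (T : Finset {t : S // t ≠ s}) : unSub s (embSub s T) = T := by
  ext ⟨t, ht⟩
  simp only [unSub, embSub, Finset.mem_subtype, Finset.mem_map,
    Function.Embedding.coe_subtype]
  constructor
  · rintro ⟨⟨a, ha⟩, haT, rfl⟩
    exact haT
  · intro hT
    exact ⟨⟨t, ht⟩, hT, rfl⟩

lemma not_mem_embSub (T : Finset {t : S // t ≠ s}) : s ∉ embSub s T := by
  simp [embSub]

lemma unSub_nonempty {U : Finset S} {x : S} (hx : x ∈ U) (hxs : x ≠ s) :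
    (unSub s U).Nonempty :=
  ⟨⟨x, hxs⟩, by rw [unSub, Finset.mem_subtype]; exact hx⟩

lemma unSub_nonempty' {U : Finset S} (hU : U.Nonempty) (hs : s ∉ U) :
    (unSub s U).Nonempty := by
  obtain ⟨x, hx⟩ := hU
  exact unSub_nonempty s hx (fun h => hs (h ▸ hx))

lemma embSub_bot : embSub s (⊥ : Finset {t : S // t ≠ s}) = ⊥ := rfl

lemma insert_bot_subset {U : Finset S} (hs : s ∈ U) :
    insert s (embSub s (⊥ : Finset {t : S // t ≠ s})) ≤ U := by
  rw [embSub_bot]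
  intro x hx
  rcases Finset.mem_insert.mp hx with rfl | hx
  · exact hs
  · exact absurd hx (Finset.notMem_empty x)

lemma insert_embSub_unSub_subset {U : Finset S} (hs : s ∈ U) :
    insert s (embSub s (unSub s U)) ≤ U :=
  Finset.insert_subset hs (embSub_unSub_subset s U)

lemma subset_insert_embSub_unSub (U : Finset S) :
    U ≤ insert s (embSub s (unSub s U)) := by
  intro x hx
  by_cases hxs : x = s
  · subst hxs; exact Finset.mem_insert_self x _
  · refine Finset.mem_insert_of_mem ?_
    rw [embSub, unSub, Finset.subtype_map, Finset.mem_filter]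
    exact ⟨hx, hxs⟩

/-- cone naturality for cones over the nonempty subsets of `S`, stated with `Q.map`. -/
lemma cw (c : Cone (ObjectProperty.ι (fun T : Finset S => T.Nonempty) ⋙ Q))
    {U U' : ObjectProperty.FullSubcategory (fun T : Finset S => T.Nonempty)} (h : U.obj ≤ U'.obj) :
    c.π.app U ≫ Q.map (homOfLE h) = c.π.app U' :=
  c.w ⟨homOfLE h⟩

/-- cone naturality for cones over the restricted cube, stated with `Q.map`. -/
lemma cw' (c' : Cone (ObjectProperty.ι
      (fun T : Finset {t : S // t ≠ s} => T.Nonempty) ⋙ restrictedCube s Q))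
    {T T' : ObjectProperty.FullSubcategory (fun T : Finset {t : S // t ≠ s} => T.Nonempty)}
    (h : T.obj ≤ T'.obj) (h2 : embSub s T.obj ≤ embSub s T'.obj) :
    c'.π.app T ≫ Q.map (homOfLE h2) = c'.π.app T' :=
  c'.w ⟨homOfLE h⟩

/-- Lift a cone over the restricted cube to a cone over the insert-cube. -/
def liftedCone (c' : Cone (ObjectProperty.ι
      (fun T : Finset {t : S // t ≠ s} => T.Nonempty) ⋙ restrictedCube s Q)) :
    Cone (ObjectProperty.ι
      (fun T : Finset {t : S // t ≠ s} => T.Nonempty) ⋙ insertCube s Q) where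
  pt := c'.pt
  π :=
    { app := fun T => c'.π.app T ≫
        Q.map (homOfLE (Finset.subset_insert s (embSub s T.obj)))
      naturality := fun T T' g => by
        dsimp
        rw [Category.id_comp]
        have h := leOfHom g.hom
        rw [show ((insertCube s Q).map g.hom : _) =
            Q.map (homOfLE (insert_mono s h)) from rfl]
        erw [Category.assoc, Qmap_comp, ← cw' s Q c' h (embSub_mono s h), Category.assoc,
          Qmap_comp]; rfl }

lemma sigma_w (hins : IsLimit (cubeCone (insertCube s Q)))
    (c' : Cone (ObjectProperty.ι
      (fun T : Finset {t : S // t ≠ s} => T.Nonempty) ⋙ restrictedCube s Q))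
    (T : ObjectProperty.FullSubcategory (fun T : Finset {t : S // t ≠ s} => T.Nonempty)) :
    hins.lift (liftedCone s Q c') ≫
      Q.map (homOfLE (show insert s (embSub s (⊥ : Finset {t : S // t ≠ s})) ≤
        insert s (embSub s T.obj) from insert_mono s bot_le)) =
    c'.π.app T ≫ Q.map (homOfLE (Finset.subset_insert s (embSub s T.obj))) :=
  hins.fac (liftedCone s Q c') T

/-- Extend a cone over the nonempty subsets of `S'` to a cone over the nonempty subsets
of `S`, using the limit-cube structure of the insert-cube. -/
def extendCone (hins : IsLimit (cubeCone (insertCube s Q)))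
    (c' : Cone (ObjectProperty.ι
      (fun T : Finset {t : S // t ≠ s} => T.Nonempty) ⋙ restrictedCube s Q)) :
    Cone (ObjectProperty.ι (fun T : Finset S => T.Nonempty) ⋙ Q) where
  pt := c'.pt
  π :=
    { app := fun U =>
        if hs : s ∈ U.obj then
          hins.lift (liftedCone s Q c') ≫ Q.map (homOfLE (insert_bot_subset s hs))
        else
          c'.π.app ⟨unSub s U.obj, unSub_nonempty' s U.property hs⟩ ≫
            Q.map (homOfLE (embSub_unSub_subset s U.obj))
      naturality := fun U U' g => by
        dsimp
        rw [Category.id_comp]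
        have h := leOfHom g.hom
        rw [show (Q.map g.hom : Q.obj U.obj ⟶ Q.obj U'.obj) =
            Q.map (homOfLE h) from rfl]
        by_cases hsU : s ∈ U.obj
        · have hsU' : s ∈ U'.obj := h hsU
          erw [dif_pos hsU, dif_pos hsU', Category.assoc, Qmap_comp]
        · rw [dif_neg hsU]
          by_cases hsU' : s ∈ U'.obj
          · rw [dif_pos hsU']
            have hne : (unSub s U'.obj).Nonempty := by
              obtain ⟨x, hx⟩ := U.property
              exact unSub_nonempty s (h hx) (fun he => hsU (he ▸ hx))
            erw [← Qmap_comp Q (insert_mono s (bot_le :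
                (⊥ : Finset {t : S // t ≠ s}) ≤ unSub s U'.obj))
                (insert_embSub_unSub_subset s hsU'), ← Category.assoc,
              sigma_w s Q hins c' ⟨unSub s U'.obj, hne⟩]
            erw [Category.assoc, Qmap_comp, Category.assoc, Qmap_comp,
              ← cw' s Q c' (unSub_mono s h) (embSub_mono s (unSub_mono s h))
                (T := ⟨unSub s U.obj, unSub_nonempty' s U.property hsU⟩)
                (T' := ⟨unSub s U'.obj, hne⟩),
              Category.assoc, Qmap_comp]; rfl
          · rw [dif_neg hsU']
            erw [← cw' s Q c' (unSub_mono s h) (embSub_mono s (unSub_mono s h))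
                (T := ⟨unSub s U.obj, unSub_nonempty' s U.property hsU⟩)
                (T' := ⟨unSub s U'.obj, unSub_nonempty' s U'.property hsU'⟩),
              Category.assoc, Qmap_comp, Category.assoc, Qmap_comp]; rfl }

end Proof



section Instances

variable {S : Type} [Fintype S] [DecidableEq S]

instance fintypeNES : Fintype (ObjectProperty.FullSubcategory fun T : Finset S => T.Nonempty) :=
  Fintype.ofEquiv {T : Finset S // T.Nonempty}
    ⟨fun x => ⟨x.1, x.2⟩, fun x => ⟨x.1, x.2⟩, fun _ => rfl, fun _ => rfl⟩

instance finCategoryNES : FinCategory (ObjectProperty.FullSubcategory fun T : Finset S => T.Nonempty) where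
  fintypeObj := fintypeNES
  fintypeHom U V :=
    if h : U.obj ≤ V.obj then
      haveI : Subsingleton (U ⟶ V) := ⟨fun a b => by
        apply InducedCategory.hom_ext; apply Subsingleton.elim⟩
      Fintype.ofSubsingleton (⟨homOfLE h⟩ : U ⟶ V)
    else ⟨∅, fun f => absurd (leOfHom f.hom) h⟩

end Instances


/-- Let `Q` be an `S`-cube in a category with finite limits, `s ∈ S`,
and suppose the `S∖{s}`-cube `T ↦ Q(T ∪ {s})` is a limit cube. Then the canonical
morphism from the limit of `Q` over the nonempty subsets of `S` to the limit of `Q` over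
the nonempty subsets of `S∖{s}` is an isomorphism; in particular `Q` is a limit cube iff
its restriction to subsets of `S∖{s}` is. -/
theorem limitCube_restriction {C : Type u} [Category.{v} C] [HasFiniteLimits C]
    {S : Type} [Fintype S] [DecidableEq S] (s : S) (Q : Finset S ⥤ C)
    (h : IsLimitCube (insertCube s Q)) :
    (∀ (c : Cone (ObjectProperty.ι (fun T : Finset S => T.Nonempty) ⋙ Q))
        (hc : IsLimit c)
        (c' : Cone (ObjectProperty.ι
          (fun T : Finset {t : S // t ≠ s} => T.Nonempty) ⋙ restrictedCube s Q))
        (hc' : IsLimit c'),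
        IsIso (hc'.lift (restrictCone s Q c))) ∧
      (IsLimitCube Q ↔ IsLimitCube (restrictedCube s Q)) := by
  obtain ⟨hins⟩ := h
  have key : ∀ (c : Cone (ObjectProperty.ι (fun T : Finset S => T.Nonempty) ⋙ Q))
      (hc : IsLimit c)
      (c' : Cone (ObjectProperty.ι
        (fun T : Finset {t : S // t ≠ s} => T.Nonempty) ⋙ restrictedCube s Q))
      (hc' : IsLimit c'),
      IsIso (hc'.lift (restrictCone s Q c)) := by
    intro c hc c' hc'
    have hφσ : hc'.lift (restrictCone s Q c) ≫ hins.lift (liftedCone s Q c') =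
        c.π.app ⟨insert s (embSub s (⊥ : Finset {t : S // t ≠ s})),
          ⟨s, Finset.mem_insert_self s _⟩⟩ := by
      apply hins.hom_ext
      intro T
      erw [Category.assoc, hins.fac]
      rw [show (liftedCone s Q c').π.app T = c'.π.app T ≫
          Q.map (homOfLE (Finset.subset_insert s (embSub s T.obj))) from rfl]
      erw [← Category.assoc, hc'.fac]
      rw [show ((restrictCone s Q c).π.app T : _) =
          c.π.app ⟨embSub s T.obj, embSub_nonempty s T.property⟩ from rfl]
      rw [show ((cubeCone (insertCube s Q)).π.app T : _) =
          Q.map (homOfLE (show insert s (embSub s (⊥ : Finset {t : S // t ≠ s})) ≤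
            insert s (embSub s T.obj) from insert_mono s bot_le)) from rfl]
      erw [cw Q c (Finset.subset_insert s (embSub s T.obj))
          (U := ⟨embSub s T.obj, embSub_nonempty s T.property⟩) (U' := ⟨insert s (embSub s T.obj), ⟨s, Finset.mem_insert_self s _⟩⟩),
        cw Q c (insert_mono s bot_le)
          (U := ⟨insert s (embSub s (⊥ : Finset {t : S // t ≠ s})), ⟨s, Finset.mem_insert_self s _⟩⟩) (U' := ⟨insert s (embSub s T.obj), ⟨s, Finset.mem_insert_self s _⟩⟩)]
    refine ⟨hc.lift (extendCone s Q hins c'), ?_, ?_⟩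
    · apply hc.hom_ext
      intro U
      erw [Category.assoc, hc.fac, Category.id_comp]
      by_cases hs : s ∈ U.obj
      · rw [show ((extendCone s Q hins c').π.app U : _) =
            hins.lift (liftedCone s Q c') ≫ Q.map (homOfLE (insert_bot_subset s hs)) from by
              simp only [extendCone]; rw [dif_pos hs]; rfl]
        erw [← Category.assoc, hφσ]
        exact cw Q c (insert_bot_subset s hs) (U' := U)
      · rw [show ((extendCone s Q hins c').π.app U : _) =
            c'.π.app ⟨unSub s U.obj, unSub_nonempty' s U.property hs⟩ ≫
              Q.map (homOfLE (embSub_unSub_subset s U.obj)) from by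
              simp only [extendCone]; rw [dif_neg hs]]
        erw [← Category.assoc, hc'.fac]
        rw [show ((restrictCone s Q c).π.app
              ⟨unSub s U.obj, unSub_nonempty' s U.property hs⟩ : _) =
            c.π.app ⟨embSub s (unSub s U.obj),
              embSub_nonempty s (unSub_nonempty' s U.property hs)⟩ from rfl]
        exact cw Q c (embSub_unSub_subset s U.obj) (U' := U)
    · apply hc'.hom_ext
      intro T
      erw [Category.assoc, hc'.fac, Category.id_comp]
      rw [show ((restrictCone s Q c).π.app T : _) =
          c.π.app ⟨embSub s T.obj, embSub_nonempty s T.property⟩ from rfl]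
      erw [hc.fac]
      rw [show ((extendCone s Q hins c').π.app
            ⟨embSub s T.obj, embSub_nonempty s T.property⟩ : _) =
          c'.π.app ⟨unSub s (embSub s T.obj),
              unSub_nonempty' s (embSub_nonempty s T.property) (not_mem_embSub s T.obj)⟩ ≫
            Q.map (homOfLE (embSub_unSub_subset s (embSub s T.obj))) from by
            simp only [extendCone]; rw [dif_neg (not_mem_embSub s T.obj)]]
      exact cw' s Q c' (le_of_eq (unSub_embSub_obj s T.obj))
        (embSub_unSub_subset s (embSub s T.obj)) (T' := T)
  refine ⟨key, ?_⟩
  let F := ObjectProperty.ι (fun T : Finset S => T.Nonempty) ⋙ Q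
  let F' := ObjectProperty.ι (fun T : Finset {t : S // t ≠ s} => T.Nonempty) ⋙
    restrictedCube s Q
  let hc := limit.isLimit F
  let hc' := limit.isLimit F'
  haveI hiso := key (limit.cone F) hc (limit.cone F') hc'
  have lift_eq : ∀ d : Cone F, hc'.lift (restrictCone s Q d) =
      hc.lift d ≫ hc'.lift (restrictCone s Q (limit.cone F)) := by
    intro d
    apply hc'.hom_ext
    intro T
    erw [hc'.fac, Category.assoc, hc'.fac]
    exact (hc.fac d ⟨embSub s T.obj, embSub_nonempty s T.property⟩).symm
  constructor
  · rintro ⟨hQ⟩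
    haveI h1 : IsIso (hc.lift (cubeCone Q)) := by
      refine ⟨hQ.lift (limit.cone F), ?_, ?_⟩
      · apply hQ.hom_ext
        intro U
        rw [Category.assoc, hQ.fac, hc.fac, Category.id_comp]
      · apply hc.hom_ext
        intro U
        rw [Category.assoc, hc.fac, hQ.fac, Category.id_comp]
    haveI h2 : IsIso (hc'.lift (cubeCone (restrictedCube s Q))) := by
      rw [show cubeCone (restrictedCube s Q) = restrictCone s Q (cubeCone Q) from rfl,
        lift_eq (cubeCone Q)]
      exact IsIso.comp_isIso' h1 hiso
    exact ⟨hc'.ofPointIso (t := cubeCone (restrictedCube s Q))⟩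
  · rintro ⟨hR⟩
    haveI h2 : IsIso (hc'.lift (cubeCone (restrictedCube s Q))) := by
      refine ⟨hR.lift (limit.cone F'), ?_, ?_⟩
      · apply hR.hom_ext
        intro T
        rw [Category.assoc, hR.fac, hc'.fac, Category.id_comp]
      · apply hc'.hom_ext
        intro T
        rw [Category.assoc, hc'.fac, hR.fac, Category.id_comp]
    haveI h3 : IsIso (hc.lift (cubeCone Q) ≫
        hc'.lift (restrictCone s Q (limit.cone F))) := by
      rw [← lift_eq (cubeCone Q)]
      exact h2
    haveI h4 : IsIso (hc.lift (cubeCone Q)) :=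
      @IsIso.of_isIso_comp_right _ _ _ _ _ _ (hc'.lift (restrictCone s Q (limit.cone F))) hiso h3
    exact ⟨hc.ofPointIso (t := cubeCone Q)⟩


end HigherSegal
end

section
/- Let S be a nonempty finite set and let F = (f_s : I_s ⟶ [n])_{s∈S} be a compatible S-claw on [n] in the simplex category Δ. Then there exists an element m ∈ {0,…,n} that lies in the image of f_s for every s ∈ S. -/
/-!
Formalization of statements from "Higher Segal spaces via higher excision" (T. Walde).
-/

open CategoryTheory CategoryTheory.Limits SimplexCategory

universe v u

namespace HigherSegal

set_option linter.unusedVariables false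
set_option linter.unusedSectionVars false

/-- An `S`-claw `(f_s : I_s ⟶ x)_{s ∈ S}` in `Δ` is compatible if
(BC1) for each `i` there is at most one `s` such that the preimage `f_s⁻¹{i}` is not a
singleton, and (BC2) for each pair `{i−1, i}` of consecutive elements there is at most
one `s` such that the pair is not contained in the image of `f_s`. -/
def CompatibleClaw {S : Type} {x : SimplexCategory} {I : S → SimplexCategory}
    (f : ∀ s : S, I s ⟶ x) : Prop :=
  (∀ i : Fin (x.len + 1), ∀ s t : S,
      ¬(∃! a, (f s).toOrderHom a = i) → ¬(∃! a, (f t).toOrderHom a = i) → s = t) ∧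
  (∀ i : Fin x.len, ∀ s t : S,
      ¬(i.castSucc ∈ Set.range ⇑(f s).toOrderHom ∧ i.succ ∈ Set.range ⇑(f s).toOrderHom) →
      ¬(i.castSucc ∈ Set.range ⇑(f t).toOrderHom ∧ i.succ ∈ Set.range ⇑(f t).toOrderHom) →
      s = t)

/-- An `S`-claw is cyclically compatible if it is compatible and all but at most one of
its morphisms contain both the minimal and the maximal element in their image. -/
def CyclicallyCompatibleClaw {S : Type} {x : SimplexCategory} {I : S → SimplexCategory}
    (f : ∀ s : S, I s ⟶ x) : Prop :=
  CompatibleClaw f ∧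
  ∀ s t : S,
    ¬((0 : Fin (x.len + 1)) ∈ Set.range ⇑(f s).toOrderHom ∧
        Fin.last x.len ∈ Set.range ⇑(f s).toOrderHom) →
    ¬((0 : Fin (x.len + 1)) ∈ Set.range ⇑(f t).toOrderHom ∧
        Fin.last x.len ∈ Set.range ⇑(f t).toOrderHom) →
    s = t


theorem Fin.apply_eq_apply_zero_of_castSucc_eq_succ {α : Type*} {n : ℕ} {g : Fin (n + 1) → α}
    (hg : ∀ i : Fin n, g i.castSucc = g i.succ) (i : Fin (n + 1)) : g i = g 0 := by
  induction i using Fin.induction with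
  | zero => rfl
  | succ i ih => rw [← hg i, ih]

theorem CompatibleClaw.eq_of_notMem_range {S : Type} {x : SimplexCategory}
    {I : S → SimplexCategory} {f : ∀ s : S, I s ⟶ x} (h : CompatibleClaw f) {i : Fin x.len}
    {s t : S} (hs : i.castSucc ∉ Set.range ⇑(f s).toOrderHom)
    (ht : i.succ ∉ Set.range ⇑(f t).toOrderHom) : s = t :=
  h.2 i s t (fun h => hs h.1) (fun h => ht h.2)

theorem compatibleClaw_common_image_general {S : Type}
    {n : ℕ} {I : S → SimplexCategory} (f : ∀ s : S, I s ⟶ SimplexCategory.mk n)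
    (h : CompatibleClaw f) :
    ∃ m : Fin (n + 1), ∀ s : S, m ∈ Set.range ⇑(f s).toOrderHom := by
  by_contra! hmiss
  choose missing hmissing using hmiss
  have hconst : ∀ i, missing i = missing 0 :=
    Fin.apply_eq_apply_zero_of_castSucc_eq_succ fun i => h.eq_of_notMem_range (hmissing _) (hmissing _)
  -- a single morphism then misses every point, although its domain is nonempty
  exact hmissing ((f (missing 0)).toOrderHom 0) (by rw [hconst]; exact ⟨0, rfl⟩)

/-- For a nonempty finite `S`, every compatible `S`-claw on `[n]` in
`Δ` admits an element `m ∈ {0, …, n}` in the image of every one of its morphisms. -/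
theorem compatibleClaw_common_image {S : Type} [Fintype S] [DecidableEq S] [Nonempty S]
    {n : ℕ} {I : S → SimplexCategory} (f : ∀ s : S, I s ⟶ SimplexCategory.mk n)
    (h : CompatibleClaw f) :
    ∃ m : Fin (n + 1), ∀ s : S, m ∈ Set.range ⇑(f s).toOrderHom :=
  compatibleClaw_common_image_general f h

end HigherSegal
end

section
/- Let S be a finite set and let F = (f_s : I_s ⟶ [n])_{s∈S} be a compatible S-claw on [n] in the simplex category Δ which is left active or right active. Then F is cyclically compatible, i.e., all but at most one of the morphisms f_s contain both 0 and n in their image. -/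
/-!
Formalization of statements from "Higher Segal spaces via higher excision" (T. Walde).
-/

open CategoryTheory CategoryTheory.Limits SimplexCategory

universe v u

namespace HigherSegal

set_option linter.unusedVariables false
set_option linter.unusedSectionVars false

/-- A compatible claw on `[n]` in `Δ` which is left active or right
active is cyclically compatible. -/
theorem compatibleClaw_active_cyclicallyCompatible {S : Type} [Fintype S] [DecidableEq S]
    {n : ℕ} {I : S → SimplexCategory} (f : ∀ s : S, I s ⟶ SimplexCategory.mk n)
    (hc : CompatibleClaw f)
    (ha : (∀ s, IsLeftActive (f s)) ∨ (∀ s, IsRightActive (f s))) :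
    CyclicallyCompatibleClaw f := by
  refine ⟨hc, ?_⟩
  intro s t hs ht
  rcases ha with hL | hR
  · -- left active: 0 is always in the range, so failure means last ∉ range
    have h0 : ∀ u : S, (0 : Fin ((SimplexCategory.mk n).len + 1)) ∈
        Set.range ⇑(f u).toOrderHom := fun u => ⟨0, hL u⟩
    have hs' : Fin.last (SimplexCategory.mk n).len ∉
        Set.range ⇑(f s).toOrderHom := fun h => hs ⟨h0 s, h⟩
    have ht' : Fin.last (SimplexCategory.mk n).len ∉
        Set.range ⇑(f t).toOrderHom := fun h => ht ⟨h0 t, h⟩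
    cases n with
    | zero => exact absurd (h0 s) (by simpa using hs')
    | succ m =>
      refine hc.2 (Fin.last m) s t ?_ ?_
      · intro ⟨_, h2⟩
        exact hs' (by simpa [Fin.succ_last] using h2)
      · intro ⟨_, h2⟩
        exact ht' (by simpa [Fin.succ_last] using h2)
  · -- right active: last is always in the range, so failure means 0 ∉ range
    have h0 : ∀ u : S, Fin.last (SimplexCategory.mk n).len ∈
        Set.range ⇑(f u).toOrderHom := fun u => ⟨Fin.last _, hR u⟩
    have hs' : (0 : Fin ((SimplexCategory.mk n).len + 1)) ∉
        Set.range ⇑(f s).toOrderHom := fun h => hs ⟨h, h0 s⟩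
    have ht' : (0 : Fin ((SimplexCategory.mk n).len + 1)) ∉
        Set.range ⇑(f t).toOrderHom := fun h => ht ⟨h, h0 t⟩
    cases n with
    | zero => exact absurd (h0 s) (by simpa [Fin.last] using hs')
    | succ m =>
      refine hc.2 ⟨0, by simp⟩ s t ?_ ?_
      · intro ⟨h1, _⟩
        exact hs' (by simpa using h1)
      · intro ⟨h1, _⟩
        exact ht' (by simpa using h1)

end HigherSegal
end

section
/- Let 0 < i < n. The commutative square in the simplex category Δ with corners [0] (top left), [n−i] (top right), [i] (bottom left), [n] (bottom right), whose morphisms are: top [0] ⟶ [n−i], 0 ↦ 0; left [0] ⟶ [i], 0 ↦ i; right [n−i] ⟶ [n], j ↦ i + j; bottom [i] ⟶ [n], j ↦ j, is both a pullback square and a pushout square in Δ. -/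
/-!
Formalization of statements from "Higher Segal spaces via higher excision" (T. Walde).
-/

open CategoryTheory CategoryTheory.Limits SimplexCategory

universe v u

namespace HigherSegal

set_option linter.unusedVariables false
set_option linter.unusedSectionVars false


lemma comp_app {a b c : SimplexCategory} (f : a ⟶ b) (g : b ⟶ c)
    (x : Fin (a.len + 1)) :
    (f ≫ g).toOrderHom x = g.toOrderHom (f.toOrderHom x) := by
  rw [SimplexCategory.comp_toOrderHom]; rfl

/-- For `0 < i < n`, the square in `Δ` with corners `[0]`, `[n−i]`,
`[i]`, `[n]`, top `0 ↦ 0`, left `0 ↦ i`, right `j ↦ i + j`, bottom `j ↦ j`, is both a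
pullback and a pushout square. -/
theorem inert_square_biCartesian (i n : ℕ) (h0 : 0 < i) (hn : i < n) :
    IsPullback
      (SimplexCategory.mkHom ⟨fun _ => 0, monotone_const⟩ :
        SimplexCategory.mk 0 ⟶ SimplexCategory.mk (n - i))
      (SimplexCategory.mkHom ⟨fun _ => Fin.last i, monotone_const⟩ :
        SimplexCategory.mk 0 ⟶ SimplexCategory.mk i)
      (SimplexCategory.mkHom
        ⟨fun x => ⟨i + (x : ℕ), by have := x.isLt; omega⟩,
          fun a b hab => by
            simp only [Fin.mk_le_mk]
            exact Nat.add_le_add_left hab i⟩ :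
        SimplexCategory.mk (n - i) ⟶ SimplexCategory.mk n)
      (SimplexCategory.mkHom
        ⟨fun x => ⟨(x : ℕ), by have := x.isLt; omega⟩,
          fun a b hab => by simp only [Fin.mk_le_mk]; exact hab⟩ :
        SimplexCategory.mk i ⟶ SimplexCategory.mk n) ∧
    IsPushout
      (SimplexCategory.mkHom ⟨fun _ => 0, monotone_const⟩ :
        SimplexCategory.mk 0 ⟶ SimplexCategory.mk (n - i))
      (SimplexCategory.mkHom ⟨fun _ => Fin.last i, monotone_const⟩ :
        SimplexCategory.mk 0 ⟶ SimplexCategory.mk i)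
      (SimplexCategory.mkHom
        ⟨fun x => ⟨i + (x : ℕ), by have := x.isLt; omega⟩,
          fun a b hab => by
            simp only [Fin.mk_le_mk]
            exact Nat.add_le_add_left hab i⟩ :
        SimplexCategory.mk (n - i) ⟶ SimplexCategory.mk n)
      (SimplexCategory.mkHom
        ⟨fun x => ⟨(x : ℕ), by have := x.isLt; omega⟩,
          fun a b hab => by simp only [Fin.mk_le_mk]; exact hab⟩ :
        SimplexCategory.mk i ⟶ SimplexCategory.mk n) := by
  set top : SimplexCategory.mk 0 ⟶ SimplexCategory.mk (n - i) :=
    SimplexCategory.mkHom ⟨fun _ => 0, monotone_const⟩ with htop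
  set left : SimplexCategory.mk 0 ⟶ SimplexCategory.mk i :=
    SimplexCategory.mkHom ⟨fun _ => Fin.last i, monotone_const⟩ with hleft
  set right : SimplexCategory.mk (n - i) ⟶ SimplexCategory.mk n :=
    SimplexCategory.mkHom
      ⟨fun x => ⟨i + (x : ℕ), by have := x.isLt; omega⟩,
        fun a b hab => by
          simp only [Fin.mk_le_mk]
          exact Nat.add_le_add_left hab i⟩ with hright
  set bot : SimplexCategory.mk i ⟶ SimplexCategory.mk n :=
    SimplexCategory.mkHom
      ⟨fun x => ⟨(x : ℕ), by have := x.isLt; omega⟩,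
        fun a b hab => by simp only [Fin.mk_le_mk]; exact hab⟩ with hbot
  -- evaluation facts
  have htop' : ∀ x, (top.toOrderHom x : ℕ) = 0 := fun x => rfl
  have hleft' : ∀ x, (left.toOrderHom x : ℕ) = i := fun x => rfl
  have hright' : ∀ x, (right.toOrderHom x : ℕ) = i + (x : ℕ) := fun x => rfl
  have hbot' : ∀ x, (bot.toOrderHom x : ℕ) = (x : ℕ) := fun x => rfl
  have comm : top ≫ right = left ≫ bot := by
    apply SimplexCategory.Hom.ext
    apply OrderHom.ext
    funext x
    apply Fin.ext
    rw [comp_app, comp_app]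
    show (right.toOrderHom _ : ℕ) = (bot.toOrderHom _ : ℕ)
    rw [hright', hbot', htop' x, hleft' x]
    omega
  constructor
  · apply IsPullback.of_isLimit' ⟨comm⟩
    refine PullbackCone.IsLimit.mk comm
      (fun s => SimplexCategory.Hom.mk ⟨fun _ => 0, monotone_const⟩) ?_ ?_ ?_
    · intro s
      apply SimplexCategory.Hom.ext
      apply OrderHom.ext
      funext x
      have hc := congrArg (fun f => ((SimplexCategory.Hom.toOrderHom f) x : ℕ)) s.condition
      simp only [comp_app] at hc
      rw [hright', hbot'] at hc
      have hle : ((s.snd.toOrderHom x : ℕ)) ≤ i := by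
        have h := (s.snd.toOrderHom x).isLt
        have : (s.snd.toOrderHom x : ℕ) < i + 1 := h
        omega
      apply Fin.ext
      rw [comp_app]
      show (top.toOrderHom _ : ℕ) = _
      rw [htop']
      omega
    · intro s
      apply SimplexCategory.Hom.ext
      apply OrderHom.ext
      funext x
      have hc := congrArg (fun f => ((SimplexCategory.Hom.toOrderHom f) x : ℕ)) s.condition
      simp only [comp_app] at hc
      rw [hright', hbot'] at hc
      apply Fin.ext
      rw [comp_app]
      show (left.toOrderHom _ : ℕ) = _
      rw [hleft']
      have hlt : (s.snd.toOrderHom x : ℕ) < i + 1 := (s.snd.toOrderHom x).isLt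
      omega
    · intro s m _ _
      apply SimplexCategory.Hom.ext
      apply OrderHom.ext
      funext x
      exact @Subsingleton.elim (Fin 1) _ _ _
  · apply IsPushout.of_isColimit' ⟨comm⟩
    have key : ∀ s : PushoutCocone top left,
        s.inl.toOrderHom ⟨0, Nat.succ_pos _⟩ = s.inr.toOrderHom ⟨i, Nat.lt_succ_self i⟩ := by
      intro s
      have hc := congrArg (fun f => (SimplexCategory.Hom.toOrderHom f) 0) s.condition
      simp only [comp_app] at hc
      convert hc using 2
      all_goals apply Fin.ext
      all_goals first
        | exact (htop' 0).symm
        | exact (hleft' 0).symm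
    refine PushoutCocone.IsColimit.mk comm
      (fun s => SimplexCategory.Hom.mk
        ⟨fun k => if h : (k : ℕ) ≤ i then
            s.inr.toOrderHom ⟨(k : ℕ), by show (k : ℕ) < i + 1; omega⟩
          else
            s.inl.toOrderHom ⟨(k : ℕ) - i, by
              have hk : (k : ℕ) < n + 1 := k.isLt
              show (k : ℕ) - i < n - i + 1
              omega⟩, ?_⟩) ?_ ?_ ?_
    · -- monotone
      intro a b hab
      have hab' : (a : ℕ) ≤ (b : ℕ) := hab
      by_cases ha : (a : ℕ) ≤ i
      · by_cases hb : (b : ℕ) ≤ i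
        · simp only [dif_pos ha, dif_pos hb]
          exact s.inr.toOrderHom.monotone (by simpa using hab')
        · simp only [dif_pos ha, dif_neg hb]
          calc s.inr.toOrderHom ⟨(a : ℕ), by show (a : ℕ) < i + 1; omega⟩
              ≤ s.inr.toOrderHom ⟨i, Nat.lt_succ_self i⟩ :=
                s.inr.toOrderHom.monotone (by simpa using ha)
            _ = s.inl.toOrderHom ⟨0, Nat.succ_pos _⟩ := (key s).symm
            _ ≤ _ := s.inl.toOrderHom.monotone (by simp)
      · have hb : ¬ (b : ℕ) ≤ i := by omega
        simp only [dif_neg ha, dif_neg hb]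
        refine s.inl.toOrderHom.monotone ?_
        show (a : ℕ) - i ≤ (b : ℕ) - i
        omega
    · intro s
      apply SimplexCategory.Hom.ext
      apply OrderHom.ext
      funext x
      rw [comp_app]
      show (if h : (right.toOrderHom x : ℕ) ≤ i then
            s.inr.toOrderHom ⟨(right.toOrderHom x : ℕ), _⟩
          else s.inl.toOrderHom ⟨(right.toOrderHom x : ℕ) - i, _⟩) = s.inl.toOrderHom x
      rcases Nat.eq_zero_or_pos (x : ℕ) with hx | hx
      · rw [dif_pos (by rw [hright']; omega)]
        convert (key s).symm using 2 <;>
          (apply Fin.ext; simp only [Fin.val_mk, hright']; omega)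
      · rw [dif_neg (by rw [hright']; omega)]
        congr 1 <;> exact Fin.ext (by show i + (x : ℕ) - i = (x : ℕ); omega)
    · intro s
      apply SimplexCategory.Hom.ext
      apply OrderHom.ext
      funext x
      rw [comp_app]
      show (if h : (bot.toOrderHom x : ℕ) ≤ i then
            s.inr.toOrderHom ⟨(bot.toOrderHom x : ℕ), _⟩
          else s.inl.toOrderHom ⟨(bot.toOrderHom x : ℕ) - i, _⟩) = s.inr.toOrderHom x
      have hx : (x : ℕ) < i + 1 := x.isLt
      rw [dif_pos (by rw [hbot']; omega)]
      congr 1 <;> exact Fin.ext rfl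
    · intro s m hml hmr
      apply SimplexCategory.Hom.ext
      apply OrderHom.ext
      funext k
      have hk : (k : ℕ) < n + 1 := k.isLt
      show m.toOrderHom k = if h : (k : ℕ) ≤ i then
            s.inr.toOrderHom ⟨(k : ℕ), _⟩
          else s.inl.toOrderHom ⟨(k : ℕ) - i, _⟩
      by_cases h : (k : ℕ) ≤ i
      · rw [dif_pos h]
        have := congrArg
          (fun f => (SimplexCategory.Hom.toOrderHom f)
            ⟨(k : ℕ), by show (k : ℕ) < i + 1; omega⟩) hmr
        simp only [comp_app] at this
        refine Eq.trans ?_ this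
        congr 1 <;> exact Fin.ext rfl
      · rw [dif_neg h]
        have := congrArg
          (fun f => (SimplexCategory.Hom.toOrderHom f)
            ⟨(k : ℕ) - i, by show (k : ℕ) - i < n - i + 1; omega⟩) hml
        simp only [comp_app] at this
        refine Eq.trans ?_ this
        congr 1 <;> exact Fin.ext (by show (k : ℕ) = i + ((k : ℕ) - i); omega)

end HigherSegal
end
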